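/- arXiv:cs/0604081 — 4 statements merged into one kernel-verified Lean document; each statement's English description precedes it below -/
import Mathlib

section
/- Soundness of the well-founded ordering rule (wfo): let (S, ≺) be a well-founded order and suppose for every x ∈ S and every position n of the run, if F(x) holds at n then there exists m ≥ n where either G holds at m or F(y) holds at m for some y ≺ x. Then the run satisfies (∃ x, F(x)) ↝ G. -/
theorem wfo_rule_sound {S₀ A : Type*} (σ : ℕ → S₀)
    (r : A → A → Prop) (hwf : WellFounded r)
    (F : A → ℕ → Prop) (G : ℕ → Prop)
    (h : ∀ x n, F x n → ∃ m, n ≤ m ∧ (G m ∨ ∃ y, r y x ∧ F y m)) :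
    ∀ n, (∃ x, F x n) → ∃ m, n ≤ m ∧ G m := by
  have key : ∀ x, ∀ n, F x n → ∃ m, n ≤ m ∧ G m := by
    intro x
    induction x using hwf.induction with
    | _ x ih =>
      intro n hF
      obtain ⟨m, hnm, hG | ⟨y, hyx, hFy⟩⟩ := h x n hF
      · exact ⟨m, hnm, hG⟩
      · obtain ⟨m', hm', hG⟩ := ih y hyx m hFy
        exact ⟨m', hnm.trans hm', hG⟩
  rintro n ⟨x, hF⟩
  exact key x n hF
end

section
/- Soundness of the (fair) rule: suppose (i) for every event a with parameters, whenever P holds before a transition satisfying BA_a but not satisfying BA_e(t), then P or Q holds after the transition; stuttering steps also preserve P ∨ Q when the step does not satisfy BA_e(t); and (ii) P implies fair_e(t). Then every run (satisfying the weak fairness condition for e(t)) satisfies P ↝ (Q ∨ (P ∧ e(t))), i.e., from any position where P holds, there is a later position where Q holds or where P holds and an e(t)-transition occurs. -/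
theorem fair_rule_sound {S : Type*} (σ : ℕ → S)
    (B : S → S → Prop) (f : S → Prop) (P Q : S → Prop)
    (hwf : ∀ n, ∃ m, n ≤ m ∧ (¬ f (σ m) ∨ B (σ m) (σ (m+1))))
    (hpres : ∀ n, P (σ n) → ¬ B (σ n) (σ (n+1)) → P (σ (n+1)) ∨ Q (σ (n+1)))
    (hfair : ∀ s, P s → f s) :
    ∀ n, P (σ n) → ∃ m, n ≤ m ∧ (Q (σ m) ∨ (P (σ m) ∧ B (σ m) (σ (m+1)))) := by
  intro n hn
  obtain ⟨m, hnm, h⟩ := hwf n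
  have key : ∀ j, (∃ m, n ≤ m ∧ (Q (σ m) ∨ (P (σ m) ∧ B (σ m) (σ (m+1))))) ∨ P (σ (n + j)) := by
    intro j
    induction j with
    | zero => exact Or.inr hn
    | succ k ih =>
      rcases ih with hdone | hP
      · exact Or.inl hdone
      · by_cases hB : B (σ (n + k)) (σ (n + k + 1))
        · exact Or.inl ⟨n + k, Nat.le_add_right _ _, Or.inr ⟨hP, hB⟩⟩
        · rcases hpres (n + k) hP hB with hP' | hQ'
          · exact Or.inr hP'
          · exact Or.inl ⟨n + k + 1, by omega, Or.inl hQ'⟩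
  rcases key (m - n) with hdone | hP
  · exact hdone
  · rw [Nat.add_sub_cancel' hnm] at hP
    rcases h with hf | hB
    · exact absurd (hfair _ hP) hf
    · exact ⟨m, hnm, Or.inr ⟨hP, hB⟩⟩
end

section
/- Refinement simulation theorem: if Ref is a refinement of Abs with respect to gluing invariant J — i.e., (a) every initial Ref-state is glued to some initial Abs-state, (b) every step of a refining event can be matched by an abstract event step preserving J, and (c) every step of a new event can be matched by abstract stuttering preserving J — then for every sequence σ : ℕ → C satisfying the Ref initial condition and whose every step is either a refining-event step, a new-event step, or stuttering, there exists a sequence τ : ℕ → A satisfying the Abs initial condition, whose every step is either an abstract-event step or stuttering, and such that J (τ n) (σ n) holds for all n. (Fairness conditions are ignored: only the safety part of Theorem 1.) -/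
theorem refinement_simulation {A C : Type*}
    (InitA : A → Prop) (BAa : A → A → Prop)
    (InitC : C → Prop) (BAr BAn : C → C → Prop)
    (J : A → C → Prop)
    (ha : ∀ c, InitC c → ∃ a, InitA a ∧ J a c)
    (hb : ∀ a c c', J a c → BAr c c' → ∃ a', BAa a a' ∧ J a' c')
    (hc : ∀ a c c', J a c → BAn c c' → J a c')
    (σ : ℕ → C) (h0 : InitC (σ 0))
    (hstep : ∀ n, BAr (σ n) (σ (n+1)) ∨ BAn (σ n) (σ (n+1)) ∨ σ (n+1) = σ n) :
    ∃ τ : ℕ → A, InitA (τ 0) ∧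
      (∀ n, BAa (τ n) (τ (n+1)) ∨ τ (n+1) = τ n) ∧
      (∀ n, J (τ n) (σ n)) := by
  classical
  obtain ⟨a0, ha0, hj0⟩ := ha _ h0
  have key : ∀ a n, J a (σ n) →
      ∃ a', (BAa a a' ∨ a' = a) ∧ J a' (σ (n+1)) := by
    intro a n hj
    rcases hstep n with h | h | h
    · obtain ⟨a', h1, h2⟩ := hb a _ _ hj h
      exact ⟨a', Or.inl h1, h2⟩
    · exact ⟨a, Or.inr rfl, hc a _ _ hj h⟩
    · exact ⟨a, Or.inr rfl, h ▸ hj⟩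
  let τ : ℕ → {p : ℕ × A // J p.2 (σ p.1)} := fun n =>
    Nat.rec ⟨(0, a0), hj0⟩ (fun _ p => ⟨(p.1.1 + 1, Classical.choose (key p.1.2 p.1.1 p.2)),
      (Classical.choose_spec (key p.1.2 p.1.1 p.2)).2⟩) n
  have hidx : ∀ n, (τ n).1.1 = n := by
    intro n; induction n with
    | zero => rfl
    | succ k ih => simp only [τ, Nat.rec] at ih ⊢; omega
  refine ⟨fun n => (τ n).1.2, ha0, ?_, ?_⟩
  · intro n
    have := (Classical.choose_spec (key (τ n).1.2 (τ n).1.1 (τ n).2)).1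
    rcases this with h | h
    · exact Or.inl h
    · exact Or.inr h
  · intro n
    have := (τ n).2
    rwa [hidx n] at this
end

section
/- Preservation of permissions under refinement: under the refinement simulation conditions, assume the abstract system implements the permission perm for abstract event ea (∀ a, InvA a → (∃ a', BAa a a') → perm a), every reachable abstract state satisfies InvA, and every refining concrete step can be matched by an abstract ea-step (condition (b)). Then whenever a refining step BAr (σ n) (σ (n+1)) occurs in a concrete run σ, and a is any abstract state of the simulating abstract run glued to σ n (so that J a (σ n) and InvA a), the translated permission holds at σ n: ∃ a, J a (σ n) ∧ perm a. -/
theorem permission_preserved_by_refinement {A C : Type*}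
    (InitA : A → Prop) (BAa : A → A → Prop) (InvA : A → Prop)
    (InitC : C → Prop) (BAr BAn : C → C → Prop)
    (J : A → C → Prop) (perm : A → Prop)
    (hInvInit : ∀ a, InitA a → InvA a)
    (hInvStep : ∀ a a', InvA a → BAa a a' → InvA a')
    (ha : ∀ c, InitC c → ∃ a, InitA a ∧ J a c)
    (hb : ∀ a c c', J a c → BAr c c' → ∃ a', BAa a a' ∧ J a' c')
    (hc : ∀ a c c', J a c → BAn c c' → J a c')
    (hperm : ∀ a, InvA a → (∃ a', BAa a a') → perm a)
    (σ : ℕ → C) (h0 : InitC (σ 0))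
    (hstep : ∀ n, BAr (σ n) (σ (n+1)) ∨ BAn (σ n) (σ (n+1)) ∨ σ (n+1) = σ n) :
    ∀ n, BAr (σ n) (σ (n+1)) → ∃ a, J a (σ n) ∧ perm a := by
  have key : ∀ n, ∃ a, InvA a ∧ J a (σ n) := by
    intro n
    induction n with
    | zero =>
      obtain ⟨a, hI, hJ⟩ := ha _ h0
      exact ⟨a, hInvInit a hI, hJ⟩
    | succ n ih =>
      obtain ⟨a, hI, hJ⟩ := ih
      rcases hstep n with h | h | h
      · obtain ⟨a', hba, hJ'⟩ := hb a _ _ hJ h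
        exact ⟨a', hInvStep a a' hI hba, hJ'⟩
      · exact ⟨a, hI, hc a _ _ hJ h⟩
      · exact ⟨a, hI, h ▸ hJ⟩
  intro n hr
  obtain ⟨a, hI, hJ⟩ := key n
  obtain ⟨a', hba, _⟩ := hb a _ _ hJ hr
  exact ⟨a, hJ, hperm a hI ⟨a', hba⟩⟩
end
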